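/- Tau function multiplicativity implies invariance of Schwarz's form under change of dualizing element: suppose τ : G × X → k^× satisfies the cocycle identity τ_L(fg) = τ_{gL}(f)·τ_L(g) for an abelian group G acting on a set X (with values in an abelian group k^×). Fix L ∈ X and suppose g, g' ∈ G satisfy gL = g'L. Then τ_L(g³)/τ_L(g)³ = τ_L((g')³)/τ_L(g')³. -/

import Mathlib

/-!
Write `g' = f * g`; then `f` fixes `g • L`, and, `G` being abelian, every `a • g • L`.
At a fixed point `M` of `f` the cocycle identity makes `n ↦ τ M (f ^ n)` multiplicative, and
comparing `τ M (a * f)` with `τ M (f * a)` shows `τ (a • M) f = τ M f`. Hence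
`τ L (g' ^ n) = τ (g • L) f ^ n * τ L (g ^ n)` and `τ L g' = τ (g • L) f * τ L g`,
so the factor `τ (g • L) f ^ n` cancels from `τ L (g ^ n) / τ L g ^ n`.
-/

section Cocycle

variable {G X k : Type*} {τ : X → G → k}

theorem cocycle_pow_of_smul_eq [Monoid G] [MulAction G X] [LeftCancelMonoid k]
    (hcoc : ∀ (f g : G) (L : X), τ L (f * g) = τ (g • L) f * τ L g)
    {f : G} {M : X} (hf : f • M = M) (n : ℕ) : τ M (f ^ n) = τ M f ^ n := by
  induction n with
  | zero => simpa using hcoc 1 1 M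
  | succ n ih => rw [pow_succ, hcoc, hf, ih, pow_succ]

theorem cocycle_smul_of_smul_eq [Monoid G] [MulAction G X] [CancelCommMonoid k]
    (hcoc : ∀ (f g : G) (L : X), τ L (f * g) = τ (g • L) f * τ L g)
    {a f : G} {M : X} (hcomm : Commute a f) (hf : f • M = M) : τ (a • M) f = τ M f := by
  have h := hcoc a f M
  rw [hcomm.eq, hcoc, hf, mul_comm] at h
  exact mul_left_cancel h

theorem cocycle_mul_pow_of_smul_eq [CommGroup G] [MulAction G X] [CancelCommMonoid k]
    (hcoc : ∀ (f g : G) (L : X), τ L (f * g) = τ (g • L) f * τ L g)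
    {f g : G} {L : X} (hf : f • g • L = g • L) (n : ℕ) :
    τ L ((f * g) ^ n) = τ (g • L) f ^ n * τ L (g ^ n) := by
  have hgn : g ^ n • L = (g ^ n * g⁻¹) • g • L := by rw [smul_smul, inv_mul_cancel_right]
  have hfix : f • g ^ n • L = g ^ n • L := by
    rw [hgn, smul_smul, mul_comm, ← smul_smul, hf]
  rw [mul_pow, hcoc, cocycle_pow_of_smul_eq hcoc hfix, hgn,
    cocycle_smul_of_smul_eq hcoc (Commute.all _ _) hf]

theorem cocycle_pow_div_pow_eq_of_smul_eq [CommGroup G] [MulAction G X] [CommGroup k]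
    (hcoc : ∀ (f g : G) (L : X), τ L (f * g) = τ (g • L) f * τ L g)
    {L : X} {g g' : G} (h : g • L = g' • L) (n : ℕ) :
    τ L (g ^ n) / τ L g ^ n = τ L (g' ^ n) / τ L g' ^ n := by
  obtain ⟨f, rfl⟩ : ∃ f, g' = f * g := ⟨g' * g⁻¹, (inv_mul_cancel_right g' g).symm⟩
  have hf : f • g • L = g • L := by rw [smul_smul, ← h]
  rw [cocycle_mul_pow_of_smul_eq hcoc hf, hcoc, mul_pow, mul_div_mul_left_eq_div]

end Cocycle

/-- Let `G` be an abelian group acting on a set `X`, and let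
`τ : X → G → kˣ` (values in an abelian group `k`) satisfy the cocycle identity
`τ_L(fg) = τ_{gL}(f)·τ_L(g)`.  If `gL = g'L`, then
`τ_L(g³)/τ_L(g)³ = τ_L(g'³)/τ_L(g')³`. -/
theorem schwarz_form_independent_of_g {G X k : Type*} [CommGroup G] [CommGroup k]
    [MulAction G X] (τ : X → G → k)
    (hcoc : ∀ (f g : G) (L : X), τ L (f * g) = τ (g • L) f * τ L g)
    (L : X) (g g' : G) (h : g • L = g' • L) :
    τ L (g ^ 3) / (τ L g) ^ 3 = τ L (g' ^ 3) / (τ L g') ^ 3 :=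
  cocycle_pow_div_pow_eq_of_smul_eq hcoc h 3
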